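/- In the system !_{k}MacLL with single-formula contraction C (from Γ[(!A,!A)] ⇒ C derive Γ[!A] ⇒ C) instead of CK, the sequent !a ⊗ !b ⇒ (a⊗b) ⊗ (a⊗b) is NOT derivable without cut (for distinct propositional variables a and b), even though it is derivable with cut. Hence this system does not admit cut elimination. -/

import Mathlib

/-- Multiplicative exponential formulas: variables, unit, !, ⊗, →, ←. -/
inductive Fm : Type where
  | var : Nat → Fm
  | one : Fm
  | bang : Fm → Fm
  | tens : Fm → Fm → Fm
  | arr : Fm → Fm → Fm      -- A → B
  | larr : Fm → Fm → Fm     -- B ← A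
deriving DecidableEq

/-- Structures: binary trees of formulas, allowing the empty structure. -/
inductive Str : Type where
  | emp : Str
  | leaf : Fm → Str
  | comma : Str → Str → Str
deriving DecidableEq

/-- One-hole structure contexts. -/
inductive Ctx : Type where
  | hole : Ctx
  | commaL : Ctx → Str → Ctx
  | commaR : Str → Ctx → Ctx

/-- Plug a structure into the hole of a context. -/
def Ctx.fill : Ctx → Str → Str
  | .hole, Δ => Δ
  | .commaL c Δ, P => .comma (c.fill P) Δ
  | .commaR Γ c, P => .comma Γ (c.fill P)

/-- !Γ : bang every leaf formula of a structure. -/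
def bangStr : Str → Str
  | .emp => .emp
  | .leaf A => .leaf (.bang A)
  | .comma a b => .comma (bangStr a) (bangStr b)

/-- `StarBang Γ Γ'` : Γ' is Γ with some subset of its leaf formulas banged (!*Γ). -/
inductive StarBang : Str → Str → Prop where
  | emp : StarBang .emp .emp
  | leaf (A : Fm) : StarBang (.leaf A) (.leaf A)
  | leafBang (A : Fm) : StarBang (.leaf A) (.leaf (.bang A))
  | comma {a a' b b' : Str} : StarBang a a' → StarBang b b' →
      StarBang (.comma a b) (.comma a' b')

/-- Proper structures: nonempty binary trees of formulas (no occurrence of the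
empty structure), matching the grammar Γ ::= (Γ,Γ) | F. -/
inductive Str.proper : Str → Prop where
  | leaf (A : Fm) : (Str.leaf A).proper
  | comma {a b : Str} : a.proper → b.proper → (Str.comma a b).proper

/-- Flags selecting the optional modal/structural rules of a system. -/
structure Flags where
  bangL : Bool := false
  bangR : Bool := false
  bangRK : Bool := false
  bangR4 : Bool := false
  bangRK4 : Bool := false
  contr : Bool := false     -- single-formula contraction C
  contrK : Bool := false    -- structural contraction CK
  weak : Bool := false      -- weakening W
  cut : Bool := false

/-- Sequent derivability in MacLL extended by the rules selected by `fl`,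
with nonlogical axioms `Ax`. -/
inductive Der (fl : Flags) (Ax : Set (Str × Fm)) : Str → Fm → Prop where
  | ax {Γ : Str} {C : Fm} : (Γ, C) ∈ Ax → Der fl Ax Γ C
  | init (A : Fm) : Der fl Ax (.leaf A) A
  | tensL (Γ : Ctx) {A B C : Fm} :
      Der fl Ax (Γ.fill (.comma (.leaf A) (.leaf B))) C →
      Der fl Ax (Γ.fill (.leaf (.tens A B))) C
  | tensR {Γ Δ : Str} {A B : Fm} :
      Der fl Ax Γ A → Der fl Ax Δ B → Der fl Ax (.comma Γ Δ) (.tens A B)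
  | arrL (Γ : Ctx) {Δ : Str} {A B C : Fm} :
      Der fl Ax Δ A → Der fl Ax (Γ.fill (.leaf B)) C →
      Der fl Ax (Γ.fill (.comma Δ (.leaf (.arr A B)))) C
  | arrR {Γ : Str} {A B : Fm} :
      Der fl Ax (.comma (.leaf A) Γ) B → Der fl Ax Γ (.arr A B)
  | larrL (Γ : Ctx) {Δ : Str} {A B C : Fm} :
      Der fl Ax Δ A → Der fl Ax (Γ.fill (.leaf B)) C →
      Der fl Ax (Γ.fill (.comma (.leaf (.larr B A)) Δ)) C
  | larrR {Γ : Str} {A B : Fm} :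
      Der fl Ax (.comma Γ (.leaf A)) B → Der fl Ax Γ (.larr B A)
  | oneL (Γ : Ctx) {C : Fm} :
      Der fl Ax (Γ.fill .emp) C → Der fl Ax (Γ.fill (.leaf .one)) C
  | oneR : Der fl Ax .emp .one
  | bangL (Γ : Ctx) {A C : Fm} : fl.bangL = true →
      Der fl Ax (Γ.fill (.leaf A)) C → Der fl Ax (Γ.fill (.leaf (.bang A))) C
  | bangR {A C : Fm} : fl.bangR = true →
      Der fl Ax (.leaf A) C → Der fl Ax (.leaf (.bang A)) (.bang C)
  | bangRK {Γ : Str} {C : Fm} : fl.bangRK = true →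
      Der fl Ax Γ C → Der fl Ax (bangStr Γ) (.bang C)
  | bangR4 {A C : Fm} : fl.bangR4 = true →
      Der fl Ax (.leaf (.bang A)) C → Der fl Ax (.leaf (.bang A)) (.bang C)
  | bangRK4 {Γ Γ' : Str} {C : Fm} : fl.bangRK4 = true →
      StarBang Γ Γ' → Der fl Ax Γ' C → Der fl Ax (bangStr Γ) (.bang C)
  | contr (Γ : Ctx) {A : Fm} {C : Fm} : fl.contr = true →
      Der fl Ax (Γ.fill (.comma (.leaf (.bang A)) (.leaf (.bang A)))) C →
      Der fl Ax (Γ.fill (.leaf (.bang A))) C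
  | contrK (Γ : Ctx) {Δ : Str} {C : Fm} : fl.contrK = true → Δ.proper →
      Der fl Ax (Γ.fill (.comma (bangStr Δ) (bangStr Δ))) C →
      Der fl Ax (Γ.fill (bangStr Δ)) C
  | weak (Γ : Ctx) {A C : Fm} : fl.weak = true →
      Der fl Ax (Γ.fill .emp) C → Der fl Ax (Γ.fill (.leaf (.bang A))) C
  | cut (Γ : Ctx) {Δ : Str} {A C : Fm} : fl.cut = true →
      Der fl Ax Δ A → Der fl Ax (Γ.fill (.leaf A)) C →
      Der fl Ax (Γ.fill Δ) C

/-- Plain MacLL (no modal or structural rules, no cut). -/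
def macll : Flags := {}

/-- !_{k}MacLL with the single-formula contraction C, cut-free. -/
def sys6 : Flags := { bangL := true, bangRK := true, contr := true }

/-- The same system with cut. -/
def sys6c : Flags := { bangL := true, bangRK := true, contr := true, cut := true }

/-! With cut, `!a, !b ⇒ !(a ⊗ b)` (by !RK) and `!(a ⊗ b) ⇒ (a ⊗ b) ⊗ (a ⊗ b)` (by !L, ⊗R and C)
combine into the sequent. Without cut, the sequent can only come from `!a, !b ⇒ (a ⊗ b) ⊗ (a ⊗ b)`
by ⊗L. Below that, only !L and C apply to the atomic antecedent until ⊗R splits it along its comma,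
so one half derives `a ⊗ b` from a structure mentioning only `a`. This is impossible, since cut-free
derivations of arrow-free succedents only use variables that occur in the antecedent. -/

def Fm.vars : Fm → Set Nat
  | .var n => {n}
  | .one => ∅
  | .bang A => A.vars
  | .tens A B | .arr A B | .larr A B => A.vars ∪ B.vars

def Str.vars : Str → Set Nat
  | .emp => ∅
  | .leaf A => A.vars
  | .comma Γ Δ => Γ.vars ∪ Δ.vars

def Fm.ArrowFree : Fm → Prop
  | .var _ | .one => True
  | .bang A => A.ArrowFree
  | .tens A B => A.ArrowFree ∧ B.ArrowFree
  | .arr _ _ | .larr _ _ => False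

def Fm.IsLiteral : Fm → Prop
  | .var _ => True
  | .bang A => ∃ n, A = .var n
  | _ => False

def Str.AllLeaves (P : Fm → Prop) : Str → Prop
  | .emp => True
  | .leaf A => P A
  | .comma Γ Δ => Γ.AllLeaves P ∧ Δ.AllLeaves P

theorem Ctx.fill_eq_leaf {c : Ctx} {X : Str} {F : Fm} (h : c.fill X = .leaf F) :
    c = .hole ∧ X = .leaf F := by
  cases c with
  | hole => exact ⟨rfl, h⟩
  | commaL | commaR => simp [Ctx.fill] at h

theorem Str.vars_fill_mono (c : Ctx) {X Y : Str} (h : X.vars ⊆ Y.vars) :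
    (c.fill X).vars ⊆ (c.fill Y).vars := by
  induction c with
  | hole => exact h
  | commaL c Δ ih => exact Set.union_subset_union_left _ ih
  | commaR Γ c ih => exact Set.union_subset_union_right _ ih

theorem Str.vars_bangStr (Γ : Str) : (bangStr Γ).vars = Γ.vars := by
  induction Γ <;> simp_all [bangStr, Str.vars, Fm.vars]

theorem StarBang.vars_eq {Γ Γ' : Str} (h : StarBang Γ Γ') : Γ'.vars = Γ.vars := by
  induction h <;> simp_all [Str.vars, Fm.vars]

theorem bangStr_ne_leaf_tens (Γ : Str) (A B : Fm) : bangStr Γ ≠ .leaf (.tens A B) := by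
  cases Γ <;> simp [bangStr]

namespace Str.AllLeaves

variable {P : Fm → Prop}

theorem of_fill {c : Ctx} {X : Str} (h : (c.fill X).AllLeaves P) : X.AllLeaves P := by
  induction c with
  | hole => exact h
  | commaL c Δ ih => exact ih h.1
  | commaR Γ c ih => exact ih h.2

theorem fill {c : Ctx} {X Y : Str} (h : (c.fill X).AllLeaves P) (hY : Y.AllLeaves P) :
    (c.fill Y).AllLeaves P := by
  induction c with
  | hole => exact hY
  | commaL c Δ ih => exact ⟨ih h.1, h.2⟩
  | commaR Γ c ih => exact ⟨h.1, ih h.2⟩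

end Str.AllLeaves

variable {fl : Flags}

theorem Der.vars_subset (hcut : fl.cut = false) {Γ : Str} {C : Fm} (d : Der fl ∅ Γ C)
    (hC : C.ArrowFree) : C.vars ⊆ Γ.vars := by
  induction d with
  | ax h => exact absurd h (Set.notMem_empty _)
  | init => exact subset_rfl
  | tensR _ _ ihA ihB => exact Set.union_subset_union (ihA hC.1) (ihB hC.2)
  | arrR | larrR => exact hC.elim
  | oneR => exact Set.empty_subset _
  | bangR _ _ ih | bangR4 _ _ ih => exact ih hC
  | bangRK _ _ ih => exact (Str.vars_bangStr _).symm ▸ ih hC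
  | bangRK4 _ hsb _ ih => exact (Str.vars_bangStr _).symm ▸ hsb.vars_eq ▸ ih hC
  | cut _ hfl => simp [hcut] at hfl
  | tensL c _ ih | arrL c _ _ _ ih | larrL c _ _ _ ih | oneL c _ ih | bangL c _ _ ih
  | contr c _ _ ih | contrK c _ _ _ ih | weak c _ _ ih =>
    exact (ih hC).trans (Str.vars_fill_mono c fun x hx => by simp_all [Str.vars, Fm.vars])

theorem Der.tensL_inv (hcut : fl.cut = false) {A B C : Fm}
    (d : Der fl ∅ (.leaf (.tens A B)) C) (hC : C.ArrowFree) :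
    Der fl ∅ (.comma (.leaf A) (.leaf B)) C := by
  generalize hΓ : Str.leaf (.tens A B) = Γ at d
  cases d with
  | ax h => exact absurd h (Set.notMem_empty _)
  | init => cases hΓ; exact .tensR (.init A) (.init B)
  | tensL c d =>
    obtain ⟨rfl, h⟩ := c.fill_eq_leaf hΓ.symm
    cases h
    exact d
  | arrR | larrR => exact hC.elim
  | cut _ hfl => simp [hcut] at hfl
  | bangRK | bangRK4 => exact absurd hΓ.symm (bangStr_ne_leaf_tens _ _ _)
  | contrK c _ _ =>
    exact absurd (c.fill_eq_leaf hΓ.symm).2 (bangStr_ne_leaf_tens _ _ _)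
  | arrL c | larrL c | oneL c | bangL c | contr c | weak c =>
    simpa using (c.fill_eq_leaf hΓ.symm).2.symm
  | tensR | oneR | bangR | bangR4 => simp at hΓ

def SplitsAtComma (fl : Flags) (Γ : Str) (C : Fm) : Prop :=
  ∀ L R A B, Γ = .comma L R → C = .tens A B →
    ∃ L' R', L'.vars ⊆ L.vars ∧ R'.vars ⊆ R.vars ∧ Der fl ∅ L' A ∧ Der fl ∅ R' B

theorem SplitsAtComma.of_fill_leaf {c : Ctx} {F : Fm} {Y : Str} {C : Fm}
    (hlit : (c.fill (.leaf F)).AllLeaves Fm.IsLiteral)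
    (ih : (c.fill Y).AllLeaves Fm.IsLiteral → SplitsAtComma fl (c.fill Y) C)
    (hvars : Y.vars ⊆ F.vars) (hY : F.IsLiteral → Y.AllLeaves Fm.IsLiteral) :
    SplitsAtComma fl (c.fill (.leaf F)) C := by
  have hsplit := ih (hlit.fill (hY hlit.of_fill))
  intro L R A B hΓ hC
  cases c with
  | hole => cases hΓ
  | commaL c Δ =>
    cases hΓ
    obtain ⟨L', R', hL', hR', dL, dR⟩ := hsplit _ _ A B rfl hC
    exact ⟨L', R', hL'.trans (Str.vars_fill_mono c hvars), hR', dL, dR⟩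
  | commaR Γ c =>
    cases hΓ
    obtain ⟨L', R', hL', hR', dL, dR⟩ := hsplit _ _ A B rfl hC
    exact ⟨L', R', hL', hR'.trans (Str.vars_fill_mono c hvars), dL, dR⟩

theorem Der.splitsAtComma (hcut : fl.cut = false) (hcontrK : fl.contrK = false) {Γ : Str}
    {C : Fm} (d : Der fl ∅ Γ C) (hlit : Γ.AllLeaves Fm.IsLiteral) : SplitsAtComma fl Γ C := by
  induction d with
  | ax h => exact absurd h (Set.notMem_empty _)
  | tensR dL dR =>
    rintro L R A B ⟨⟩ ⟨⟩
    exact ⟨_, _, subset_rfl, subset_rfl, dL, dR⟩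
  | init | oneR | bangR | bangR4 => rintro _ _ _ _ ⟨⟩
  | arrR | larrR | bangRK | bangRK4 => rintro _ _ _ _ _ ⟨⟩
  | cut _ hfl => simp [hcut] at hfl
  | contrK _ hfl => simp [hcontrK] at hfl
  | tensL | arrL | larrL | oneL => simpa [Str.AllLeaves, Fm.IsLiteral] using hlit.of_fill
  | bangL c _ _ ih =>
    refine .of_fill_leaf hlit ih subset_rfl ?_
    rintro ⟨n, rfl⟩
    trivial
  | contr c _ _ ih =>
    exact .of_fill_leaf hlit ih (by simp [Str.vars, Fm.vars]) fun h => ⟨h, h⟩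
  | weak c _ _ ih => exact .of_fill_leaf hlit ih (Set.empty_subset _) fun _ => trivial

theorem der_sys6c_tens_bang (A B : Fm) :
    Der sys6c ∅ (.leaf (.tens (.bang A) (.bang B))) (.tens (.tens A B) (.tens A B)) := by
  have bang_tens : Der sys6c ∅ (.comma (.leaf (.bang A)) (.leaf (.bang B))) (.bang (.tens A B)) :=
    .bangRK (Γ := .comma (.leaf A) (.leaf B)) rfl (.tensR (.init A) (.init B))
  have dereliction : Der sys6c ∅ (.leaf (.bang (.tens A B))) (.tens A B) :=
    .bangL .hole rfl (.init _)
  have duplicate : Der sys6c ∅ (.leaf (.bang (.tens A B))) (.tens (.tens A B) (.tens A B)) :=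
    .contr .hole rfl (.tensR dereliction dereliction)
  exact .tensL .hole (.cut .hole rfl bang_tens duplicate)

/-- With single-formula contraction C in place of CK, the sequent
!a ⊗ !b ⇒ (a⊗b) ⊗ (a⊗b) is derivable with cut but not without, so the
system does not admit cut elimination. -/
theorem stmt6 (a b : Nat) (hab : a ≠ b) :
    ¬ Der sys6 ∅
        (.leaf (.tens (.bang (.var a)) (.bang (.var b))))
        (.tens (.tens (.var a) (.var b)) (.tens (.var a) (.var b))) ∧
    Der sys6c ∅
        (.leaf (.tens (.bang (.var a)) (.bang (.var b))))
        (.tens (.tens (.var a) (.var b)) (.tens (.var a) (.var b))) := by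
  refine ⟨fun d => ?_, der_sys6c_tens_bang _ _⟩
  have dComma := d.tensL_inv rfl ⟨⟨trivial, trivial⟩, trivial, trivial⟩
  obtain ⟨L, -, hL, -, dL, -⟩ :=
    dComma.splitsAtComma rfl rfl ⟨⟨a, rfl⟩, ⟨b, rfl⟩⟩ _ _ _ _ rfl rfl
  have hb : b ∈ L.vars := dL.vars_subset rfl ⟨trivial, trivial⟩ (by simp [Fm.vars])
  exact hab (hL hb).symm
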